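/- arXiv:1501.01668 — 4 statements merged into one kernel-verified Lean document; each statement's English description precedes it below -/
import Mathlib

section
/- The handoff rate for a user moving radially away from its serving AP in a PPP network of density λ, defined as H(v, λ) = 1 − ∫₀^∞ exp(−λπ((r+v)² − r²))·2πλr·exp(−πλr²) dr, equals 1 − (exp(−λπv²) − 2vπ√λ·Q(v√(2πλ))). -/
/-!
Combining the exponentials, the integrand is `2πλ r exp(-πλ (r + v)²)`. Substituting
`s = r + v` and writing `r = s - v` splits the integral into `∫_v^∞ 2πλ s exp(-πλ s²) ds`, which
is elementary and equals `exp(-πλ v²)`, minus `2πλ v` times a Gaussian tail, which the scaling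
`t = s √(2πλ)` turns into `Q(v √(2πλ))`.
-/

open Real MeasureTheory Set Filter Topology

theorem integral_comp_add_right_Ioi {E : Type*} [NormedAddCommGroup E] [NormedSpace ℝ E]
    (g : ℝ → E) (a v : ℝ) :
    ∫ x in Ioi a, g (x + v) = ∫ x in Ioi (a + v), g x := by
  rw [← integral_indicator measurableSet_Ioi, ← integral_indicator measurableSet_Ioi,
    ← integral_add_right_eq_self (indicator (Ioi (a + v)) g) v]
  congr 1
  ext x
  simp only [indicator_apply, mem_Ioi, add_lt_add_iff_right]

section GaussianTail

variable {a : ℝ}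

theorem integral_Ioi_mul_exp_neg_mul_sq (ha : 0 < a) (c : ℝ) :
    ∫ s in Ioi c, s * exp (-a * s ^ 2) = exp (-a * c ^ 2) / (2 * a) := by
  have hderiv : ∀ x ∈ Ici c,
      HasDerivAt (fun s => -exp (-a * s ^ 2) / (2 * a)) (x * exp (-a * x ^ 2)) x := by
    intro x _
    refine ((((hasDerivAt_pow 2 x).const_mul (-a)).exp.fun_neg).div_const (2 * a)).congr_deriv ?_
    field_simp
    ring
  have hlim : Tendsto (fun s => -exp (-a * s ^ 2) / (2 * a)) atTop (𝓝 0) := by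
    have hsq : Tendsto (fun s : ℝ => -a * s ^ 2) atTop atBot := by
      simpa only [Function.comp_def, neg_mul] using
        tendsto_neg_atTop_atBot.comp ((tendsto_pow_atTop two_ne_zero).const_mul_atTop ha)
    simpa using ((tendsto_exp_atBot.comp hsq).neg).div_const (2 * a)
  rw [integral_Ioi_of_hasDerivAt_of_tendsto' hderiv
    (integrable_mul_exp_neg_mul_sq ha).integrableOn hlim]
  ring

theorem integral_Ioi_exp_neg_mul_sq_eq (ha : 0 < a) (c : ℝ) :
    ∫ s in Ioi c, exp (-a * s ^ 2)
      = (√(2 * a))⁻¹ * ∫ t in Ioi (c * √(2 * a)), exp (-t ^ 2 / 2) := by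
  have hb : 0 < √(2 * a) := by positivity
  have hscale : ∀ s : ℝ, exp (-(s * √(2 * a)) ^ 2 / 2) = exp (-a * s ^ 2) := fun s => by
    rw [mul_pow, sq_sqrt (by positivity)]
    ring_nf
  simp_rw [← hscale]
  exact integral_comp_mul_right_Ioi (fun t => exp (-t ^ 2 / 2)) c hb

theorem integral_Ioi_mul_exp_neg_mul_add_sq (ha : 0 < a) (v : ℝ) :
    ∫ r in Ioi 0, r * exp (-a * (r + v) ^ 2)
      = exp (-a * v ^ 2) / (2 * a) - v * ∫ s in Ioi v, exp (-a * s ^ 2) := by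
  have hshift := integral_comp_add_right_Ioi (fun s => (s - v) * exp (-a * s ^ 2)) 0 v
  simp only [zero_add, add_sub_cancel_right] at hshift
  simp_rw [hshift, sub_mul]
  rw [integral_sub (integrable_mul_exp_neg_mul_sq ha).integrableOn
      ((integrable_exp_neg_mul_sq ha).integrableOn.const_mul v),
    integral_Ioi_mul_exp_neg_mul_sq ha, integral_const_mul]

end GaussianTail

theorem stmt3_general (lam v : ℝ) (hlam : 0 < lam)
    (Q : ℝ → ℝ)
    (hQ : ∀ x, Q x = (Real.sqrt (2*π))⁻¹ * ∫ t in Set.Ioi x, Real.exp (-t^2/2))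
    (H : ℝ)
    (hH : H = 1 - ∫ r in Set.Ioi (0:ℝ),
        Real.exp (-(lam*π*((r+v)^2 - r^2))) * (2*π*lam*r) * Real.exp (-(π*lam*r^2))) :
    H = 1 - (Real.exp (-(lam*π*v^2)) - 2*v*π*Real.sqrt lam * Q (v*Real.sqrt (2*π*lam))) := by
  have ha : 0 < π * lam := by positivity
  have hintegrand : ∀ r : ℝ,
      exp (-(lam*π*((r+v)^2 - r^2))) * (2*π*lam*r) * exp (-(π*lam*r^2))
        = 2 * (π * lam) * (r * exp (-(π * lam) * (r + v) ^ 2)) := fun r => by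
    rw [mul_right_comm, ← exp_add]
    ring_nf
  have hsqrt : √(2 * (π * lam)) = √(2 * π) * √lam := by
    rw [← sqrt_mul (by positivity), mul_assoc]
  have htail : ∫ s in Ioi v, exp (-(π * lam) * s ^ 2)
      = (√(2 * π) * √lam)⁻¹ * (√(2 * π) * Q (v * √(2 * π * lam))) := by
    rw [integral_Ioi_exp_neg_mul_sq_eq ha, hQ, mul_assoc 2 π lam, hsqrt, mul_inv_cancel_left₀]
    positivity
  simp_rw [hH, hintegrand]
  rw [integral_const_mul, integral_Ioi_mul_exp_neg_mul_add_sq ha, htail]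
  field_simp
  linear_combination (-(2 * π * v * Q (v * √(2 * π * lam)))) * mul_self_sqrt hlam.le

theorem stmt3 (lam v : ℝ) (hlam : 0 < lam) (hv : 0 ≤ v)
    (Q : ℝ → ℝ)
    (hQ : ∀ x, Q x = (Real.sqrt (2*π))⁻¹ * ∫ t in Set.Ioi x, Real.exp (-t^2/2))
    (H : ℝ)
    (hH : H = 1 - ∫ r in Set.Ioi (0:ℝ),
        Real.exp (-(lam*π*((r+v)^2 - r^2))) * (2*π*lam*r) * Real.exp (-(π*lam*r^2))) :
    H = 1 - (Real.exp (-(lam*π*v^2)) - 2*v*π*Real.sqrt lam * Q (v*Real.sqrt (2*π*lam))) :=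
  stmt3_general lam v hlam Q hQ H hH
end

section
/- Subject to Σ_{k=1}^K A_k = 1 with A_k ≥ 0, the function Σ_{k=1}^K A_k/(1 + A_k ρ_k), with constants ρ_k > 0, is maximized at A_k* = (1/ρ_k)/(Σ_{j=1}^K 1/ρ_j), and the maximum value equals (Σ_k 1/ρ_k)/(1 + Σ_k 1/ρ_k). -/
/-!
Each summand `x ↦ x / (1 + x ρ)` is concave on `x ≥ 0`, so it lies below its tangent line at any
point `y ≥ 0`, with slope `1 / (1 + y ρ)²`. At `A*` every tangent has the same slope, since
`1 + A*ₖ ρₖ = 1 + 1 / Σⱼ ρⱼ⁻¹` does not depend on `k`. Summing the tangent bounds, the linear parts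
cancel on the simplex, which is the Lagrange condition: `A*` is the maximizer.
-/

open Finset

lemma div_one_add_mul_le_tangent {ρ x y : ℝ} (hρ : 0 < ρ) (hx : 0 ≤ x) (hy : 0 ≤ y) :
    x / (1 + x * ρ) ≤ y / (1 + y * ρ) + (x - y) / (1 + y * ρ) ^ 2 := by
  have hx' : 0 < 1 + x * ρ := by positivity
  have hy' : 0 < 1 + y * ρ := by positivity
  have gap : y / (1 + y * ρ) + (x - y) / (1 + y * ρ) ^ 2 - x / (1 + x * ρ)
      = ρ * (x - y) ^ 2 / ((1 + x * ρ) * (1 + y * ρ) ^ 2) := by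
    field_simp
    ring
  have : 0 ≤ ρ * (x - y) ^ 2 / ((1 + x * ρ) * (1 + y * ρ) ^ 2) := by positivity
  linarith

lemma sum_div_one_add_mul_le_of_denom_eq {ι : Type*} (s : Finset ι) {ρ A B : ι → ℝ} {c : ℝ}
    (hρ : ∀ k ∈ s, 0 < ρ k) (hA : ∀ k ∈ s, 0 ≤ A k) (hB : ∀ k ∈ s, 0 ≤ B k)
    (hc : ∀ k ∈ s, 1 + B k * ρ k = c) (hsum : ∑ k ∈ s, A k = ∑ k ∈ s, B k) :
    ∑ k ∈ s, A k / (1 + A k * ρ k) ≤ ∑ k ∈ s, B k / (1 + B k * ρ k) :=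
  calc ∑ k ∈ s, A k / (1 + A k * ρ k)
      ≤ ∑ k ∈ s, (B k / (1 + B k * ρ k) + (A k - B k) / c ^ 2) :=
        sum_le_sum fun k hk => hc k hk ▸
          div_one_add_mul_le_tangent (hρ k hk) (hA k hk) (hB k hk)
    _ = ∑ k ∈ s, B k / (1 + B k * ρ k) := by
        rw [sum_add_distrib, ← sum_div, sum_sub_distrib, hsum, sub_self, zero_div, add_zero]

theorem stmt11_general (K : ℕ) (ρ : Fin K → ℝ) (hρ : ∀ k, 0 < ρ k)
    (Astar : Fin K → ℝ)
    (hAstar : ∀ k, Astar k = (ρ k)⁻¹ / ∑ j, (ρ j)⁻¹) :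
    (∀ A : Fin K → ℝ, (∀ k, 0 ≤ A k) → (∑ k, A k) = 1 →
      ∑ k, A k / (1 + A k * ρ k) ≤ ∑ k, Astar k / (1 + Astar k * ρ k)) ∧
    (∑ k, Astar k / (1 + Astar k * ρ k))
      = (∑ k, (ρ k)⁻¹) / (1 + ∑ k, (ρ k)⁻¹) := by
  set S := ∑ j, (ρ j)⁻¹
  have hdenom : ∀ k, 1 + Astar k * ρ k = 1 + S⁻¹ := fun k => by
    rw [hAstar k, div_mul_eq_mul_div, inv_mul_cancel₀ (hρ k).ne', one_div]
  have hsumAstar : ∑ k, Astar k = S / S := by simp only [hAstar, ← sum_div]; rfl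
  refine ⟨fun A hA hsum => ?_, ?_⟩
  · obtain ⟨k, -⟩ := nonempty_of_sum_ne_zero (hsum ▸ one_ne_zero)
    have hS : 0 < S := (inv_pos.2 (hρ k)).trans_le
      (single_le_sum (fun j _ => (inv_pos.2 (hρ j)).le) (mem_univ k))
    refine sum_div_one_add_mul_le_of_denom_eq univ (fun k _ => hρ k) (fun k _ => hA k)
      (fun k _ => ?_) (fun k _ => hdenom k) ?_
    · rw [hAstar k]; exact div_nonneg (inv_pos.2 (hρ k)).le hS.le
    · rw [hsum, hsumAstar, div_self hS.ne']
  · simp only [hdenom, ← sum_div, hsumAstar]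
    -- `S = 0` only for `K = 0`, where `S / S = 0` and both sides vanish.
    rcases eq_or_ne S 0 with hS | hS
    · simp [hS]
    · field_simp
      rw [add_comm]

theorem stmt11 (K : ℕ) (hK : 1 ≤ K) (ρ : Fin K → ℝ) (hρ : ∀ k, 0 < ρ k)
    (Astar : Fin K → ℝ)
    (hAstar : ∀ k, Astar k = (ρ k)⁻¹ / ∑ j, (ρ j)⁻¹) :
    (∀ A : Fin K → ℝ, (∀ k, 0 ≤ A k) → (∑ k, A k) = 1 →
      ∑ k, A k / (1 + A k * ρ k) ≤ ∑ k, Astar k / (1 + Astar k * ρ k)) ∧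
    (∑ k, Astar k / (1 + Astar k * ρ k))
      = (∑ k, (ρ k)⁻¹) / (1 + ∑ k, (ρ k)⁻¹) :=
  stmt11_general K ρ hρ Astar hAstar
end

section
/- Let A₁*, …, A_K* ∈ (0,1) with Σ_{k=1}^K A_k* = 1, and let a_{jk} > 0 for j,k ∈ {2,…,K} satisfy a_{jk} = 1/a_{kj} and a_{ik}·a_{kj} = a_{ij} for distinct indices (i.e., a_{jk} = c_j/c_k for some positive c_j). Then the (K−1)×(K−1) matrix A with diagonal entries 1 − (A_k*)⁻¹ and off-diagonal entries A_{k,j} = a_{jk} has determinant (−1)^{K−1}·(1 − Σ_{i=2}^K A_i*)/(∏_{i=2}^K A_i*). -/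
/-! Writing `d k = -(A_k)⁻¹`, the matrix is `diag(c)⁻¹ (diag d + J) diag(c)` with `J` the all-ones
matrix, so its determinant is that of the rank-one perturbation `diag d + J`, which the matrix
determinant lemma evaluates to `(∏ d) (1 + ∑ d⁻¹) = (-1)^(K-1) (1 - ∑ A_k) / ∏ A_k`. -/

open Matrix

namespace Matrix

variable {n R : Type*} [Fintype n] [DecidableEq n] [Field R]

theorem det_of_div_mul {c : n → R} (hc : ∀ i, c i ≠ 0) (N : Matrix n n R) :
    (of fun i j => c j / c i * N i j).det = N.det := by
  have hconj : (of fun i j => c j / c i * N i j) =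
      diagonal (fun i => (c i)⁻¹) * N * diagonal c := by
    ext i j
    simp only [of_apply, mul_diagonal, diagonal_mul]
    ring
  rw [hconj, det_mul, det_mul, det_diagonal, det_diagonal, Finset.prod_inv_distrib]
  field_simp [Finset.prod_ne_zero_iff.mpr fun i _ => hc i]

theorem det_diagonal_add_of_one {d : n → R} (hd : ∀ i, d i ≠ 0) :
    (diagonal d + of fun _ _ => 1).det = (∏ i, d i) * (1 + ∑ i, (d i)⁻¹) := by
  have hfactor : (diagonal d + of fun _ _ => 1) = diagonal d *
      (1 + replicateCol Unit (fun i => (d i)⁻¹) * replicateRow Unit (fun _ => (1 : R))) := by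
    rw [mul_add, mul_one, ← Matrix.mul_assoc]
    congr 1
    ext i j
    simp [mul_apply, diagonal_apply, hd]
  rw [hfactor, det_mul, det_diagonal, det_one_add_replicateCol_mul_replicateRow]
  simp [dotProduct]

end Matrix

theorem stmt13 (K : ℕ) (A : Fin K → ℝ)
    (hA : ∀ k, A k ∈ Set.Ioo (0:ℝ) 1)
    (c : Fin (K-1) → ℝ) (hc : ∀ j, 0 < c j)
    (M : Matrix (Fin (K-1)) (Fin (K-1)) ℝ)
    (hM : ∀ k j, M k j = if k = j
        then 1 - (A ⟨k.1 + 1, by have := k.isLt; omega⟩)⁻¹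
        else c j / c k) :
    M.det = (-1 : ℝ)^(K-1)
      * (1 - ∑ i : Fin (K-1), A ⟨i.1 + 1, by have := i.isLt; omega⟩)
      / ∏ i : Fin (K-1), A ⟨i.1 + 1, by have := i.isLt; omega⟩ := by
  set B : Fin (K-1) → ℝ := fun i => A ⟨i.1 + 1, by have := i.isLt; omega⟩
  have hB : ∀ i, B i ≠ 0 := fun i => (hA _).1.ne'
  have hMconj : M = of fun k j => c j / c k *
      (diagonal (fun i => -(B i)⁻¹) + of fun _ _ => 1 : Matrix (Fin (K-1)) (Fin (K-1)) ℝ) k j := by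
    ext k j
    rw [hM]
    split_ifs with hkj
    · subst hkj
      simp only [Matrix.add_apply, of_apply, diagonal_apply_eq, div_self (hc k).ne', one_mul, B]
      ring
    · simp [hkj]
  rw [hMconj, det_of_div_mul (fun j => (hc j).ne'), det_diagonal_add_of_one (by simpa using hB),
    Finset.prod_neg, Finset.prod_inv_distrib]
  simp only [inv_neg, inv_inv, Finset.sum_neg_distrib, Finset.card_univ, Fintype.card_fin]
  ring
end

section
/- The handoff rate for radial movement, H(v, λ) = 1 − e^{−λπv²} + 2vπ√λ·Q(v√(2πλ)), is strictly increasing in v for v > 0 (for fixed λ > 0) and strictly increasing in λ for λ > 0 (for fixed v > 0), and satisfies 0 ≤ H(v,λ) ≤ 1 with H(0,λ) = 0. -/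
/-!
Put `x = v √(2πλ)`. Then `H(v, λ) = 1 - L(x)` with
`L(x) = e^{-x²/2} - x ∫_x^∞ e^{-t²/2} dt = ∫_x^∞ (t - x) e^{-t²/2} dt`,
using `∫_x^∞ t e^{-t²/2} dt = e^{-x²/2}`. The second form gives `L ≥ 0`, and
`L'(x) = -∫_x^∞ e^{-t²/2} dt < 0` makes `L` strictly decreasing from `L(0) = 1`.
Since `x` is strictly increasing in `v` and in `λ`, all claims follow.
-/

open Real MeasureTheory Set Filter Topology

theorem hasDerivAt_integral_Ioi {E : Type*} [NormedAddCommGroup E] [NormedSpace ℝ E]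
    [CompleteSpace E] {f : ℝ → E} {x : ℝ} (hf : Integrable f)
    (hmeas : StronglyMeasurableAtFilter f (𝓝 x)) (hx : ContinuousAt f x) :
    HasDerivAt (fun y => ∫ t in Ioi y, f t) (-f x) x := by
  have hsplit : (fun y => ∫ t in Ioi y, f t) =
      fun y => (∫ t in Ioi 0, f t) - ∫ t in 0..y, f t := by
    funext y
    rw [eq_sub_iff_add_eq, add_comm,
      intervalIntegral.integral_interval_add_Ioi hf.integrableOn hf.integrableOn]
  rw [hsplit]
  exact (intervalIntegral.integral_hasDerivAt_right hf.intervalIntegrable hmeas hx).const_sub _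

lemma hasDerivAt_exp_neg_sq_div_two (x : ℝ) :
    HasDerivAt (fun t : ℝ => exp (-t ^ 2 / 2)) (-x * exp (-x ^ 2 / 2)) x := by
  refine ((hasDerivAt_pow 2 x).fun_neg.div_const 2).exp.congr_deriv ?_
  norm_num
  ring

lemma integrable_exp_neg_sq_div_two : Integrable fun t : ℝ => exp (-t ^ 2 / 2) := by
  simpa [neg_div, div_eq_inv_mul] using integrable_exp_neg_mul_sq (b := (1 : ℝ) / 2) (by norm_num)

lemma integrable_mul_exp_neg_sq_div_two : Integrable fun t : ℝ => t * exp (-t ^ 2 / 2) := by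
  simpa [neg_div, div_eq_inv_mul] using
    integrable_mul_exp_neg_mul_sq (b := (1 : ℝ) / 2) (by norm_num)

lemma integral_Ioi_exp_neg_sq_div_two_pos (x : ℝ) :
    0 < ∫ t in Ioi x, exp (-t ^ 2 / 2) := by
  rw [setIntegral_pos_iff_support_of_nonneg_ae (.of_forall fun t => (exp_pos _).le)
    integrable_exp_neg_sq_div_two.integrableOn]
  simp [Function.support, exp_ne_zero]

lemma integral_Ioi_mul_exp_neg_sq_div_two (x : ℝ) :
    ∫ t in Ioi x, t * exp (-t ^ 2 / 2) = exp (-x ^ 2 / 2) := by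
  have hderiv (t : ℝ) :
      HasDerivAt (fun t : ℝ => -exp (-t ^ 2 / 2)) (t * exp (-t ^ 2 / 2)) t := by
    simpa using (hasDerivAt_exp_neg_sq_div_two t).fun_neg
  have hlim : Tendsto (fun t : ℝ => -exp (-t ^ 2 / 2)) atTop (𝓝 0) := by
    rw [← neg_zero]
    refine (tendsto_exp_comp_nhds_zero.mpr ?_).neg
    have : Tendsto (fun t : ℝ => t ^ 2 / 2) atTop atTop :=
      (tendsto_pow_atTop two_ne_zero).atTop_div_const two_pos
    simpa [neg_div] using this
  rw [integral_Ioi_of_hasDerivAt_of_tendsto' (fun t _ => hderiv t)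
    integrable_mul_exp_neg_sq_div_two.integrableOn hlim]
  ring

/-- `√(2π)` times the standard normal loss function `x ↦ 𝔼[(Z - x)⁺]`. -/
noncomputable def normalLoss (x : ℝ) : ℝ :=
  exp (-x ^ 2 / 2) - x * ∫ t in Ioi x, exp (-t ^ 2 / 2)

lemma normalLoss_zero : normalLoss 0 = 1 := by
  simp [normalLoss]

lemma normalLoss_eq_integral (x : ℝ) :
    normalLoss x = ∫ t in Ioi x, (t - x) * exp (-t ^ 2 / 2) := by
  simp_rw [sub_mul]
  rw [integral_sub integrable_mul_exp_neg_sq_div_two.integrableOn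
    (integrable_exp_neg_sq_div_two.integrableOn.const_mul x), integral_const_mul,
    integral_Ioi_mul_exp_neg_sq_div_two, normalLoss]

lemma normalLoss_nonneg (x : ℝ) : 0 ≤ normalLoss x := by
  rw [normalLoss_eq_integral]
  exact setIntegral_nonneg measurableSet_Ioi fun t ht =>
    mul_nonneg (sub_nonneg.mpr (le_of_lt ht)) (exp_pos _).le

lemma hasDerivAt_normalLoss (x : ℝ) :
    HasDerivAt normalLoss (-∫ t in Ioi x, exp (-t ^ 2 / 2)) x := by
  have hcont : Continuous fun t : ℝ => exp (-t ^ 2 / 2) := by fun_prop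
  have htail := hasDerivAt_integral_Ioi (x := x) integrable_exp_neg_sq_div_two
    (hcont.stronglyMeasurableAtFilter _ _) hcont.continuousAt
  refine ((hasDerivAt_exp_neg_sq_div_two x).sub ((hasDerivAt_id x).mul htail)).congr_deriv ?_
  simp only [id]
  ring

lemma normalLoss_strictAnti : StrictAnti normalLoss :=
  strictAnti_of_deriv_neg fun x => by
    rw [(hasDerivAt_normalLoss x).deriv, neg_lt_zero]
    exact integral_Ioi_exp_neg_sq_div_two_pos x

lemma normalLoss_le_one {x : ℝ} (hx : 0 ≤ x) : normalLoss x ≤ 1 :=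
  normalLoss_zero ▸ normalLoss_strictAnti.antitone hx

lemma normalLoss_mul_sqrt (v : ℝ) {lam : ℝ} (hlam : 0 ≤ lam) :
    normalLoss (v * √(2 * π * lam)) = exp (-(lam * π * v ^ 2)) -
      2 * v * π * √lam * ((√(2 * π))⁻¹ * ∫ t in Ioi (v * √(2 * π * lam)), exp (-t ^ 2 / 2)) := by
  have hexp : -(v * √(2 * π * lam)) ^ 2 / 2 = -(lam * π * v ^ 2) := by
    rw [mul_pow, sq_sqrt (by positivity)]
    ring
  have hcoef : 2 * v * π * √lam * (√(2 * π))⁻¹ = v * √(2 * π * lam) := by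
    have hsq : √(2 * π) ^ 2 = 2 * π := sq_sqrt (by positivity)
    rw [sqrt_mul (by positivity) lam]
    field_simp
    rw [hsq]
    ring
  rw [normalLoss, hexp, ← mul_assoc, hcoef]

theorem stmt18 (Q : ℝ → ℝ)
    (hQ : ∀ x, Q x = (Real.sqrt (2*π))⁻¹ * ∫ t in Set.Ioi x, Real.exp (-t^2/2))
    (H : ℝ → ℝ → ℝ)
    (hH : ∀ v lam, H v lam
      = 1 - (Real.exp (-(lam*π*v^2)) - 2*v*π*Real.sqrt lam * Q (v*Real.sqrt (2*π*lam)))) :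
    (∀ lam : ℝ, 0 < lam → StrictMonoOn (fun v => H v lam) (Set.Ioi (0:ℝ))) ∧
    (∀ v : ℝ, 0 < v → StrictMonoOn (fun lam => H v lam) (Set.Ioi (0:ℝ))) ∧
    (∀ lam : ℝ, 0 < lam → ∀ v : ℝ, 0 ≤ v → 0 ≤ H v lam ∧ H v lam ≤ 1) ∧
    (∀ lam : ℝ, 0 < lam → H 0 lam = 0) := by
  have hH_eq (v : ℝ) {lam : ℝ} (hlam : 0 ≤ lam) :
      H v lam = 1 - normalLoss (v * √(2 * π * lam)) := by
    rw [hH, hQ, normalLoss_mul_sqrt v hlam]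
  have hH_lt {v₁ v₂ lam₁ lam₂ : ℝ} (h₁ : 0 ≤ lam₁) (h₂ : 0 ≤ lam₂)
      (h : v₁ * √(2 * π * lam₁) < v₂ * √(2 * π * lam₂)) : H v₁ lam₁ < H v₂ lam₂ := by
    rw [hH_eq v₁ h₁, hH_eq v₂ h₂]
    linarith [normalLoss_strictAnti h]
  refine ⟨fun lam hlam => ?_, fun v hv => ?_, fun lam hlam v hv => ?_, fun lam hlam => ?_⟩
  · exact fun a _ b _ hab => hH_lt hlam.le hlam.le (mul_lt_mul_of_pos_right hab (by positivity))
  · exact fun a (ha : 0 < a) b _ hab => hH_lt ha.le (ha.trans hab).le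
      (mul_lt_mul_of_pos_left (sqrt_lt_sqrt (by positivity) (by gcongr)) hv)
  · have hx : 0 ≤ v * √(2 * π * lam) := by positivity
    rw [hH_eq v hlam.le]
    constructor
    · linarith [normalLoss_le_one hx]
    · linarith [normalLoss_nonneg (v * √(2 * π * lam))]
  · rw [hH_eq 0 hlam.le, zero_mul, normalLoss_zero, sub_self]
end
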